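/- arXiv:1610.07409 — 5 statements merged into one kernel-verified Lean document; each statement's English description precedes it below -/
import Mathlib

section
/- Let R > 1 and θ ∈ (0, π). In the hyperbolic upper half-plane ℍ, let z = e^{iθ} and let ω' = {w ∈ ℍ : |w| = R}. Then sinh(log R) · cosh(dist(z, i)) = sinh(infDist(z, ω')), where infDist denotes the metric infimum distance from the point z to the set ω'. (This is the Lambert quadrilateral identity used in the proof of Lemma 3.1(2): the right-hand side is sinh of the distance from z to the foot of the perpendicular from z to the geodesic ω'.) -/
open UpperHalfPlane

/-- The point `R·e^{iθ}` of the hyperbolic upper half-plane, for `R > 0` and `θ ∈ (0, π)`. -/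
noncomputable def hpoint (R θ : ℝ) (hR : 0 < R) (hθ0 : 0 < θ) (hθπ : θ < Real.pi) :
    UpperHalfPlane :=
  ⟨(R : ℂ) * Complex.exp ((θ : ℂ) * Complex.I), by
    have him : ((R : ℂ) * Complex.exp ((θ : ℂ) * Complex.I)).im = R * Real.sin θ := by
      simp [Complex.mul_im, Complex.exp_ofReal_mul_I_im, Complex.exp_ofReal_mul_I_re]
    rw [him]
    exact mul_pos hR (Real.sin_pos_of_pos_of_lt_pi hθ0 hθπ)⟩

/-- **Lambert quadrilateral identity** (used in the proof of Lemma 3.1(2) of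
Dumas–Lenzhen–Rafi–Tao), normalized so that the two disjoint geodesics are the unit
semicircle and the semicircle `ω' = {|w| = R}`, whose common perpendicular is the imaginary
axis with feet `i` and `R·i` at distance `log R`: for `z = e^{iθ}`,
`sinh (log R) * cosh (dist z i) = sinh (infDist z ω')`. -/
theorem lambert_identity (R θ : ℝ) (hR : 1 < R) (hθ0 : 0 < θ) (hθπ : θ < Real.pi) :
    Real.sinh (Real.log R) *
        Real.cosh (dist (hpoint 1 θ one_pos hθ0 hθπ) UpperHalfPlane.I) =
      Real.sinh (Metric.infDist (hpoint 1 θ one_pos hθ0 hθπ)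
        {w : UpperHalfPlane | ‖(w : ℂ)‖ = R}) := by
  set z := hpoint 1 θ one_pos hθ0 hθπ with hz
  set s := Real.sin θ with hsdef
  set c := Real.cos θ with hcdef
  have hs : 0 < s := Real.sin_pos_of_pos_of_lt_pi hθ0 hθπ
  have hpyth : c ^ 2 + s ^ 2 = 1 := by
    rw [hcdef, hsdef]; exact Real.cos_sq_add_sin_sq θ
  have hR0 : (0:ℝ) < R := lt_trans one_pos hR
  -- coordinates of z
  have hzre : (z : ℂ).re = c := by
    simp [hz, hpoint, UpperHalfPlane.coe, Complex.exp_ofReal_mul_I_re, hcdef]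
  have hzim : (z : ℂ).im = s := by
    simp [hz, hpoint, UpperHalfPlane.coe, Complex.exp_ofReal_mul_I_im, hsdef]
  have hzim' : z.im = s := hzim
  -- key quantities
  set K : ℝ := (R ^ 2 - 1) ^ 2 + 4 * R ^ 2 * s ^ 2 with hKdef
  have hKpos : 0 < K := by positivity
  set q : ℝ := Real.sqrt K with hqdef
  have hq2 : q ^ 2 = K := Real.sq_sqrt hKpos.le
  have hq2' : q ^ 2 = (R ^ 2 - 1) ^ 2 + 4 * R ^ 2 * s ^ 2 := by rw [hq2]
  have hqpos : 0 < q := Real.sqrt_pos.2 hKpos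
  set d0 : ℝ := Real.arsinh ((R ^ 2 - 1) / (2 * R * s)) with hd0def
  have hd0nonneg : 0 ≤ d0 := Real.arsinh_nonneg_iff.2 (div_nonneg (by nlinarith) (by positivity))
  have hcosh_d0 : Real.cosh d0 = q / (2 * R * s) := by
    rw [hd0def, Real.cosh_arsinh]
    rw [show (1 : ℝ) + ((R ^ 2 - 1) / (2 * R * s)) ^ 2 = (q / (2 * R * s)) ^ 2 by
      field_simp
      linarith only [hq2']]
    exact Real.sqrt_sq (by positivity)
  -- the witness point w0
  set x0 : ℝ := 2 * R ^ 2 * c / (1 + R ^ 2) with hx0def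
  set y0 : ℝ := R * q / (1 + R ^ 2) with hy0def
  have hy0pos : 0 < y0 := by positivity
  set w0 : UpperHalfPlane := ⟨⟨x0, y0⟩, hy0pos⟩ with hw0def
  have hw0c : (w0 : ℂ) = Complex.mk x0 y0 := rfl
  have hw0re : (w0 : ℂ).re = x0 := by rw [hw0c]
  have hw0im : (w0 : ℂ).im = y0 := by rw [hw0c]
  have hw0sq : x0 ^ 2 + y0 ^ 2 = R ^ 2 := by
    rw [hx0def, hy0def]
    field_simp
    linear_combination hq2' + 4 * R ^ 2 * hpyth
  have hw0abs : ‖(w0 : ℂ)‖ = R := by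
    rw [Complex.norm_def, Complex.normSq_apply, hw0re, hw0im]
    rw [show x0 * x0 + y0 * y0 = R ^ 2 by rw [← hw0sq]; ring]
    exact Real.sqrt_sq hR0.le
  have hw0mem : w0 ∈ {w : UpperHalfPlane | ‖(w : ℂ)‖ = R} := by
    rw [Set.mem_setOf_eq]
    exact hw0abs
  -- cosh of the distance from z to any point of the circle
  have hcosh_gen : ∀ w : UpperHalfPlane, ‖(w : ℂ)‖ = R →
      Real.cosh (dist z w) = (1 + R ^ 2 - 2 * (w : ℂ).re * c) / (2 * s * (w : ℂ).im) := by
    intro w hw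
    have hv : 0 < (w : ℂ).im := w.2
    have hsq : (w : ℂ).re ^ 2 + (w : ℂ).im ^ 2 = R ^ 2 := by
      have h := Complex.sq_norm (w : ℂ)
      rw [hw, Complex.normSq_apply] at h
      nlinarith only [h]
    rw [UpperHalfPlane.cosh_dist, Complex.dist_eq, Complex.sq_norm, Complex.normSq_apply,
      Complex.sub_re, Complex.sub_im, hzre, hzim, hzim']
    simp only [← UpperHalfPlane.coe_im]
    rw [add_div' _ _ _ (by positivity), div_eq_div_iff (by positivity) (by positivity)]
    linear_combination (2 * s * (w : ℂ).im) * hpyth + (2 * s * (w : ℂ).im) * hsq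
  -- the distance to w0 equals d0
  have hcosh_w0 : Real.cosh (dist z w0) = q / (2 * R * s) := by
    have h1 : 1 + R ^ 2 - 2 * x0 * c = q ^ 2 / (1 + R ^ 2) := by
      rw [hx0def]
      field_simp
      linear_combination (-1 : ℝ) * hq2' - 4 * R ^ 2 * hpyth
    rw [hcosh_gen w0 hw0mem, hw0re, hw0im, h1, hy0def]
    rw [div_eq_div_iff (by positivity) (by positivity)]
    ring
  have hdist_w0 : dist z w0 = d0 := by
    have h1 : Real.cosh (dist z w0) = Real.cosh d0 := by rw [hcosh_w0, hcosh_d0]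
    have h2 : |dist z w0| = |d0| := by
      have hle : |dist z w0| ≤ |d0| := Real.cosh_le_cosh.1 h1.le
      have hge : |d0| ≤ |dist z w0| := Real.cosh_le_cosh.1 h1.ge
      exact le_antisymm hle hge
    rwa [abs_of_nonneg dist_nonneg, abs_of_nonneg hd0nonneg] at h2
  -- lower bound for the distance to any point of the circle
  have hlower : ∀ w : UpperHalfPlane, ‖(w : ℂ)‖ = R → d0 ≤ dist z w := by
    intro w hw
    have hv : 0 < (w : ℂ).im := w.2
    have hsq : (w : ℂ).re ^ 2 + (w : ℂ).im ^ 2 = R ^ 2 := by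
      have h := Complex.sq_norm (w : ℂ)
      rw [hw, Complex.normSq_apply] at h
      nlinarith only [h]
    set u := (w : ℂ).re
    set v := (w : ℂ).im
    have hu2 : u ^ 2 < R ^ 2 := by nlinarith only [hv, hsq]
    have hc2 : c ^ 2 ≤ 1 := by nlinarith only [sq_nonneg s, hpyth]
    have hA : 0 < 1 + R ^ 2 - 2 * u * c := by nlinarith only [sq_nonneg (u - c), sq_nonneg (u + c), hu2, hc2, hR]
    have hv2 : v ^ 2 = R ^ 2 - u ^ 2 := by linarith only [hsq]
    have hid : (R * (1 + R ^ 2 - 2 * u * c)) ^ 2 - (q * v) ^ 2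
        = (u * (1 + R ^ 2) - 2 * R ^ 2 * c) ^ 2 := by
      linear_combination (-(v ^ 2)) * hq2' - ((R ^ 2 - 1) ^ 2 + 4 * R ^ 2 * s ^ 2) * hv2
        - 4 * R ^ 2 * (R ^ 2 - u ^ 2) * hpyth
    have hkey : q * v ≤ R * (1 + R ^ 2 - 2 * u * c) := by
      nlinarith only [hid, mul_pos hqpos hv, mul_pos hR0 hA]
    have hcosh_le : Real.cosh d0 ≤ Real.cosh (dist z w) := by
      rw [hcosh_gen w hw, hcosh_d0]
      rw [div_le_div_iff₀ (by positivity) (by positivity)]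
      calc q * (2 * s * v) = 2 * s * (q * v) := by ring
        _ ≤ 2 * s * (R * (1 + R ^ 2 - 2 * u * c)) := by
            exact mul_le_mul_of_nonneg_left hkey (by positivity)
        _ = (1 + R ^ 2 - 2 * u * c) * (2 * R * s) := by ring
    have := Real.cosh_le_cosh.1 hcosh_le
    rwa [abs_of_nonneg dist_nonneg, abs_of_nonneg hd0nonneg] at this
  -- compute infDist
  have hinf : Metric.infDist z {w : UpperHalfPlane | ‖(w : ℂ)‖ = R} = d0 := by
    apply le_antisymm
    · calc Metric.infDist z {w : UpperHalfPlane | ‖(w : ℂ)‖ = R}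
          ≤ dist z w0 := Metric.infDist_le_dist_of_mem hw0mem
        _ = d0 := hdist_w0
    · by_contra h
      push_neg at h
      rw [Metric.infDist_lt_iff ⟨w0, hw0mem⟩] at h
      obtain ⟨y, hy, hlt⟩ := h
      exact absurd hlt (not_lt.2 (hlower y hy))
  -- compute cosh (dist z I)
  have hI : Real.cosh (dist z UpperHalfPlane.I) = 1 / s := by
    rw [UpperHalfPlane.cosh_dist, Complex.dist_eq, Complex.sq_norm, Complex.normSq_apply,
      Complex.sub_re, Complex.sub_im, hzre, hzim, hzim']
    have hIc : (UpperHalfPlane.I : ℂ) = Complex.I := rfl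
    have hIim : (UpperHalfPlane.I).im = 1 := by
      rw [← UpperHalfPlane.coe_im, hIc, Complex.I_im]
    rw [hIc, Complex.I_re, Complex.I_im, hIim]
    rw [add_div' _ _ _ (by positivity), div_eq_div_iff (by positivity) (by positivity)]
    linear_combination s * hpyth
  rw [hinf, hI, hd0def, Real.sinh_arsinh, Real.sinh_log hR0]
  field_simp
end

section
/- Let R ≥ 1 and θ, φ ∈ (0, π). In the hyperbolic upper half-plane ℍ, dist(R·e^{iθ}, R·e^{iφ}) ≤ dist(e^{iθ}, R·e^{iφ}). (This is inequality (3) of Lemma 3.1, normalized so that the two geodesics are ω = {|z| = 1} and ω' = {|z| = R}: if x = e^{iθ} ∈ ω, x' = R·e^{iθ} is the corresponding equidistant point of ω', and y = R·e^{iφ} ∈ ω' is arbitrary, then d(x', y) ≤ d(x, y).) -/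
open UpperHalfPlane

set_option maxHeartbeats 1000000 in
/-- **Inequality (3) of Lemma 3.1** of Dumas–Lenzhen–Rafi–Tao, normalized so that the two
geodesics are `ω = {|z| = 1}` and `ω' = {|z| = R}`: if `x = e^{iθ} ∈ ω`, `x' = R·e^{iθ}` is
the corresponding equidistant point of `ω'`, and `y = R·e^{iφ} ∈ ω'` is arbitrary, then
`dist x' y ≤ dist x y`. -/
theorem equidistant_point_closer (R θ φ : ℝ) (hR : 1 ≤ R) (hθ0 : 0 < θ) (hθπ : θ < Real.pi)
    (hφ0 : 0 < φ) (hφπ : φ < Real.pi) :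
    dist (hpoint R θ (lt_of_lt_of_le one_pos hR) hθ0 hθπ)
        (hpoint R φ (lt_of_lt_of_le one_pos hR) hφ0 hφπ) ≤
      dist (hpoint 1 θ one_pos hθ0 hθπ)
        (hpoint R φ (lt_of_lt_of_le one_pos hR) hφ0 hφπ) := by
  have hR0 : (0:ℝ) < R := lt_of_lt_of_le one_pos hR
  have hs : 0 < Real.sin θ := Real.sin_pos_of_pos_of_lt_pi hθ0 hθπ
  have ht : 0 < Real.sin φ := Real.sin_pos_of_pos_of_lt_pi hφ0 hφπ
  rw [UpperHalfPlane.dist_eq, UpperHalfPlane.dist_eq]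
  have h2 : (0:ℝ) ≤ 2 := by norm_num
  refine mul_le_mul_of_nonneg_left (Real.arsinh_le_arsinh.mpr ?_) h2
  -- abbreviations
  set eθ := Complex.exp ((θ : ℂ) * Complex.I) with heθ
  set eφ := Complex.exp ((φ : ℂ) * Complex.I) with heφ
  have him1 : (hpoint R θ hR0 hθ0 hθπ).im = R * Real.sin θ := by
    simp [hpoint, UpperHalfPlane.im, heθ, Complex.mul_im,
      Complex.exp_ofReal_mul_I_im, Complex.exp_ofReal_mul_I_re]
  have him2 : (hpoint R φ hR0 hφ0 hφπ).im = R * Real.sin φ := by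
    simp [hpoint, UpperHalfPlane.im, heφ, Complex.mul_im,
      Complex.exp_ofReal_mul_I_im, Complex.exp_ofReal_mul_I_re]
  have him3 : (hpoint 1 θ one_pos hθ0 hθπ).im = Real.sin θ := by
    simp [hpoint, UpperHalfPlane.im, heθ, Complex.mul_im,
      Complex.exp_ofReal_mul_I_im, Complex.exp_ofReal_mul_I_re]
  set A := dist ((hpoint R θ hR0 hθ0 hθπ : ℍ) : ℂ) ((hpoint R φ hR0 hφ0 hφπ : ℍ) : ℂ) with hA
  set B := dist ((hpoint 1 θ one_pos hθ0 hθπ : ℍ) : ℂ) ((hpoint R φ hR0 hφ0 hφπ : ℍ) : ℂ) with hB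
  have hA0 : 0 ≤ A := dist_nonneg
  have hB0 : 0 ≤ B := dist_nonneg
  have hc := Real.cos_sub θ φ
  have hA2 : A ^ 2 = R ^ 2 * (2 - 2 * Real.cos (θ - φ)) := by
    rw [hA, Complex.dist_eq, Complex.sq_norm]
    have : ((hpoint R θ hR0 hθ0 hθπ : ℍ) : ℂ) - ((hpoint R φ hR0 hφ0 hφπ : ℍ) : ℂ)
        = (R : ℂ) * eθ - (R : ℂ) * eφ := rfl
    rw [this, Complex.normSq_apply]
    simp only [Complex.sub_re, Complex.sub_im, Complex.mul_re, Complex.mul_im,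
      Complex.ofReal_re, Complex.ofReal_im, heθ, heφ,
      Complex.exp_ofReal_mul_I_re, Complex.exp_ofReal_mul_I_im]
    have hθ1 := Real.sin_sq_add_cos_sq θ
    have hφ1 := Real.sin_sq_add_cos_sq φ
    nlinarith [hc]
  have hB2 : B ^ 2 = 1 + R ^ 2 - 2 * R * Real.cos (θ - φ) := by
    rw [hB, Complex.dist_eq, Complex.sq_norm]
    have : ((hpoint 1 θ one_pos hθ0 hθπ : ℍ) : ℂ) - ((hpoint R φ hR0 hφ0 hφπ : ℍ) : ℂ)
        = (1 : ℂ) * eθ - (R : ℂ) * eφ := rfl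
    rw [this, Complex.normSq_apply]
    simp only [Complex.sub_re, Complex.sub_im, Complex.mul_re, Complex.mul_im,
      Complex.ofReal_re, Complex.ofReal_im, Complex.one_re, Complex.one_im, heθ, heφ,
      Complex.exp_ofReal_mul_I_re, Complex.exp_ofReal_mul_I_im]
    have hθ1 := Real.sin_sq_add_cos_sq θ
    have hφ1 := Real.sin_sq_add_cos_sq φ
    nlinarith [hc]
  rw [him1, him2, him3]
  have hd1 : (0:ℝ) < 2 * Real.sqrt (R * Real.sin θ * (R * Real.sin φ)) := by positivity
  have hd2 : (0:ℝ) < 2 * Real.sqrt (Real.sin θ * (R * Real.sin φ)) := by positivity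
  rw [div_le_div_iff₀ hd1 hd2]
  have key : (A * (2 * Real.sqrt (Real.sin θ * (R * Real.sin φ)))) ^ 2
      ≤ (B * (2 * Real.sqrt (R * Real.sin θ * (R * Real.sin φ)))) ^ 2 := by
    have hsq1 : Real.sqrt (Real.sin θ * (R * Real.sin φ)) ^ 2
        = Real.sin θ * (R * Real.sin φ) := Real.sq_sqrt (by positivity)
    have hsq2 : Real.sqrt (R * Real.sin θ * (R * Real.sin φ)) ^ 2
        = R * Real.sin θ * (R * Real.sin φ) := Real.sq_sqrt (by positivity)
    have h1 : A ^ 2 * R ≤ B ^ 2 * R ^ 2 := by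
      rw [hA2, hB2]; nlinarith [sq_nonneg (R - 1)]
    calc (A * (2 * Real.sqrt (Real.sin θ * (R * Real.sin φ)))) ^ 2
        = A ^ 2 * R * (4 * (Real.sin θ * Real.sin φ)) := by
          rw [mul_pow, mul_pow, hsq1]; ring
      _ ≤ B ^ 2 * R ^ 2 * (4 * (Real.sin θ * Real.sin φ)) := by
          apply mul_le_mul_of_nonneg_right h1; positivity
      _ = (B * (2 * Real.sqrt (R * Real.sin θ * (R * Real.sin φ)))) ^ 2 := by
          rw [mul_pow, mul_pow, hsq2]; ring
  have hBn : 0 ≤ B * (2 * Real.sqrt (R * Real.sin θ * (R * Real.sin φ))) := by positivity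
  have hAn : 0 ≤ A * (2 * Real.sqrt (Real.sin θ * (R * Real.sin φ))) := by positivity
  exact (pow_le_pow_iff_left₀ hAn hBn two_ne_zero).mp key
end

section
/- Let ℓ > 0, c ∈ ℝ, and set r = √(c² + 1). In the hyperbolic upper half-plane ℍ, consider the two disjoint geodesics ω = {z ∈ ℍ : |z − c| = r} and ω' = {z ∈ ℍ : |z − e^ℓ·c| = e^ℓ·r} (so ω' is the image of ω under the hyperbolic isometry z ↦ e^ℓ·z, and ω passes through i). Then the distance between ω and ω', i.e. the infimum of dist(z, w) over z ∈ ω and w ∈ ω', equals 2·arsinh(sinh(ℓ/2)/r). (This records equations (angle) and (proj) in the proof of Lemma 3.7: a geodesic crossing the imaginary axis at i at angle B with sin B = 1/r, and its image under the translation of length ℓ along the imaginary axis, are at distance v with sin(B)·sinh(ℓ/2) = sinh(v/2).) -/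
open UpperHalfPlane

set_option maxHeartbeats 1000000

private lemma key_ineq (c t x y X Y : ℝ) (ht : 0 < t)
    (h1 : (x - c) ^ 2 + y ^ 2 = c ^ 2 + 1)
    (h2 : (X - t * c) ^ 2 + Y ^ 2 = t ^ 2 * (c ^ 2 + 1)) :
    (t - 1) ^ 2 * (y * Y) ≤ t * (c ^ 2 + 1) * ((x - X) ^ 2 + (y - Y) ^ 2) := by
  have hK : (0:ℝ) < 2 * c ^ 2 + 1 + t := by nlinarith [sq_nonneg c]
  have hK' : (0:ℝ) < 2 * t * c ^ 2 + 1 + t := by nlinarith [mul_nonneg ht.le (sq_nonneg c)]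
  have hN : (0:ℝ) < t ^ 2 + 2 * t * c ^ 2 + 1 := by
    nlinarith [mul_nonneg ht.le (sq_nonneg c), sq_nonneg t]
  have hP : (0:ℝ) < 2 * (t ^ 2 + 2 * t * c ^ 2 + 1) * t * (2 * c ^ 2 + 1 + t)
      * (2 * t * c ^ 2 + 1 + t) := by positivity
  have hid : 2 * (t ^ 2 + 2 * t * c ^ 2 + 1) * t * (2 * c ^ 2 + 1 + t) * (2 * t * c ^ 2 + 1 + t)
      * (t * (c ^ 2 + 1) * ((x - X) ^ 2 + (y - Y) ^ 2) - (t - 1) ^ 2 * (y * Y))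
      = (t ^ 2 + 2 * t * c ^ 2 + 1) ^ 2
          * (t * (2 * c ^ 2 + 1 + t) * y - (2 * t * c ^ 2 + 1 + t) * Y) ^ 2
      + ((t ^ 2 + 2 * t * c ^ 2 + 1) * t * ((2 * c ^ 2 + 1 + t) * x - c * (t - 1))
          - 2 * t * (c ^ 2 + 1) * ((2 * t * c ^ 2 + 1 + t) * X + c * t * (t - 1))) ^ 2
      + (t - 1) ^ 2 * ((1 + t) ^ 2 + 4 * c ^ 2 * t)
          * ((2 * t * c ^ 2 + 1 + t) * X + c * t * (t - 1)) ^ 2 := by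
    linear_combination
      (-((t ^ 2 + 2 * t * c ^ 2 + 1) * t ^ 2 * (2 * c ^ 2 + 1 + t) * (t - 1)
          * ((1 + t) ^ 2 + 4 * c ^ 2 * t))) * h1
      + ((t ^ 2 + 2 * t * c ^ 2 + 1) * (2 * t * c ^ 2 + 1 + t) * (t - 1)
          * ((1 + t) ^ 2 + 4 * c ^ 2 * t)) * h2
  have hRHS : (0:ℝ) ≤ 2 * (t ^ 2 + 2 * t * c ^ 2 + 1) * t * (2 * c ^ 2 + 1 + t)
      * (2 * t * c ^ 2 + 1 + t)
      * (t * (c ^ 2 + 1) * ((x - X) ^ 2 + (y - Y) ^ 2) - (t - 1) ^ 2 * (y * Y)) := by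
    rw [hid]
    have hM : (0:ℝ) ≤ (1 + t) ^ 2 + 4 * c ^ 2 * t := by positivity
    positivity
  have := (mul_nonneg_iff_of_pos_left hP).mp hRHS
  linarith

/-- Equations (angle) and (proj) in the proof of Lemma 3.7 of Dumas–Lenzhen–Rafi–Tao:
for `ℓ > 0`, `c ∈ ℝ` and `r = √(c² + 1)`, the geodesic `ω = {z ∈ ℍ : |z − c| = r}` of the
hyperbolic upper half-plane (which passes through `i`, meeting the imaginary axis at angle `B`
with `sin B = 1/r`) and its image `ω' = {z ∈ ℍ : |z − e^ℓ·c| = e^ℓ·r}` under the hyperbolic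
isometry `z ↦ e^ℓ·z` are at distance `v` with `sinh(v/2) = sin(B)·sinh(ℓ/2)`, i.e. the
infimum of `dist z w` over `z ∈ ω`, `w ∈ ω'` is `2·arsinh(sinh(ℓ/2)/r)`. -/
theorem dist_between_stretched_geodesics (ℓ c r : ℝ) (hℓ : 0 < ℓ)
    (hr : r = Real.sqrt (c ^ 2 + 1)) :
    sInf (Set.image2 dist
        {z : UpperHalfPlane | ‖(z : ℂ) - (c : ℂ)‖ = r}
        {z : UpperHalfPlane | ‖(z : ℂ) - ((Real.exp ℓ * c : ℝ) : ℂ)‖ =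
          Real.exp ℓ * r}) =
      2 * Real.arsinh (Real.sinh (ℓ / 2) / r) := by
  have hc1 : (0:ℝ) < c ^ 2 + 1 := by positivity
  have hr0 : 0 < r := by rw [hr]; exact Real.sqrt_pos.mpr hc1
  have hr2 : r ^ 2 = c ^ 2 + 1 := by rw [hr]; exact Real.sq_sqrt hc1.le
  set t := Real.exp ℓ with htdef
  have ht0 : (0:ℝ) < t := Real.exp_pos ℓ
  have ht1 : (1:ℝ) < t := Real.one_lt_exp_iff.mpr hℓ
  set s := Real.sinh (ℓ / 2) with hsdef
  have hs0 : 0 < s := by rw [hsdef]; exact Real.sinh_pos_iff.mpr (by linarith)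
  have hu : Real.exp (ℓ / 2) ^ 2 = t := by
    rw [htdef, sq, ← Real.exp_add]; norm_num
  have hs2 : 4 * t * s ^ 2 = (t - 1) ^ 2 := by
    rw [hsdef, Real.sinh_eq, Real.exp_neg]
    have h0 : Real.exp (ℓ / 2) ≠ 0 := (Real.exp_pos _).ne'
    field_simp
    linear_combination (4 * t * Real.exp (ℓ / 2) ^ 2 - 4) * hu
  have hK : (0:ℝ) < 2 * c ^ 2 + 1 + t := by positivity
  have hK' : (0:ℝ) < 2 * t * c ^ 2 + 1 + t := by positivity
  have hKne : (2 * c ^ 2 + 1 + t) ≠ 0 := hK.ne'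
  have hK'ne : (2 * t * c ^ 2 + 1 + t) ≠ 0 := hK'.ne'
  have hM : (0:ℝ) < (1 + t) ^ 2 + 4 * c ^ 2 * t := by positivity
  set q := Real.sqrt ((1 + t) ^ 2 + 4 * c ^ 2 * t) with hqdef
  have hq0 : 0 < q := by rw [hqdef]; exact Real.sqrt_pos.mpr hM
  have hq2 : q ^ 2 = (1 + t) ^ 2 + 4 * c ^ 2 * t := by rw [hqdef]; exact Real.sq_sqrt hM.le
  have hmem1 : (c * (t - 1) / (2 * c ^ 2 + 1 + t) - c) ^ 2
      + (r * q / (2 * c ^ 2 + 1 + t)) ^ 2 = r ^ 2 := by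
    field_simp
    linear_combination (r ^ 2) * hq2 + (-(4 * c ^ 2 * (c ^ 2 + 1))) * hr2
  have hmem2 : (c * t * (1 - t) / (2 * t * c ^ 2 + 1 + t) - t * c) ^ 2
      + (t * r * q / (2 * t * c ^ 2 + 1 + t)) ^ 2 = (t * r) ^ 2 := by
    field_simp
    linear_combination (r ^ 2) * hq2 + (-(4 * t ^ 2 * c ^ 2 * (c ^ 2 + 1))) * hr2
  have e1 : c * (t - 1) / (2 * c ^ 2 + 1 + t) - c * t * (1 - t) / (2 * t * c ^ 2 + 1 + t)
      = c * (t - 1) * ((1 + t) ^ 2 + 4 * c ^ 2 * t)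
        / ((2 * c ^ 2 + 1 + t) * (2 * t * c ^ 2 + 1 + t)) := by
    rw [div_sub_div _ _ hKne hK'ne]
    congr 1
    ring
  have e2 : r * q / (2 * c ^ 2 + 1 + t) - t * r * q / (2 * t * c ^ 2 + 1 + t)
      = r * q * (1 - t ^ 2) / ((2 * c ^ 2 + 1 + t) * (2 * t * c ^ 2 + 1 + t)) := by
    rw [div_sub_div _ _ hKne hK'ne]
    congr 1
    ring
  have hnum : (c * (t - 1) / (2 * c ^ 2 + 1 + t) - c * t * (1 - t) / (2 * t * c ^ 2 + 1 + t)) ^ 2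
      + (r * q / (2 * c ^ 2 + 1 + t) - t * r * q / (2 * t * c ^ 2 + 1 + t)) ^ 2
      = (t - 1) ^ 2 * ((1 + t) ^ 2 + 4 * c ^ 2 * t)
        / ((2 * c ^ 2 + 1 + t) * (2 * t * c ^ 2 + 1 + t)) := by
    rw [e1, e2, div_pow, div_pow, ← add_div,
      div_eq_div_iff (by positivity) (by positivity)]
    linear_combination ((2 * c ^ 2 + 1 + t) * (2 * t * c ^ 2 + 1 + t) * r ^ 2
        * (1 - t ^ 2) ^ 2) * hq2
      + ((2 * c ^ 2 + 1 + t) * (2 * t * c ^ 2 + 1 + t) * ((1 + t) ^ 2 + 4 * c ^ 2 * t)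
          * (t - 1) ^ 2 * (1 + t) ^ 2) * hr2
  have hyY : (r * q / (2 * c ^ 2 + 1 + t)) * (t * r * q / (2 * t * c ^ 2 + 1 + t))
      = t * (c ^ 2 + 1) * ((1 + t) ^ 2 + 4 * c ^ 2 * t)
        / ((2 * c ^ 2 + 1 + t) * (2 * t * c ^ 2 + 1 + t)) := by
    rw [div_mul_div_comm, div_eq_div_iff (by positivity) (by positivity)]
    linear_combination ((2 * c ^ 2 + 1 + t) * (2 * t * c ^ 2 + 1 + t) * t * r ^ 2) * hq2
      + ((2 * c ^ 2 + 1 + t) * (2 * t * c ^ 2 + 1 + t) * t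
          * ((1 + t) ^ 2 + 4 * c ^ 2 * t)) * hr2
  -- the two closest points
  set z₀ : ℍ := UpperHalfPlane.mk ⟨c * (t - 1) / (2 * c ^ 2 + 1 + t),
      r * q / (2 * c ^ 2 + 1 + t)⟩ (div_pos (mul_pos hr0 hq0) hK) with hz₀def
  set w₀ : ℍ := UpperHalfPlane.mk ⟨c * t * (1 - t) / (2 * t * c ^ 2 + 1 + t),
      t * r * q / (2 * t * c ^ 2 + 1 + t)⟩ (div_pos (mul_pos (mul_pos ht0 hr0) hq0) hK')
      with hw₀def
  refine IsLeast.csInf_eq ⟨?_, ?_⟩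
  · -- the infimum is attained at (z₀, w₀)
    refine Set.mem_image2.mpr ⟨z₀, ?_, w₀, ?_, ?_⟩
    · show ‖(z₀ : ℂ) - (c : ℂ)‖ = r
      have hsub : (z₀ : ℂ) - (c : ℂ) = ⟨c * (t - 1) / (2 * c ^ 2 + 1 + t) - c,
          r * q / (2 * c ^ 2 + 1 + t)⟩ := by
        rw [hz₀def]
        apply Complex.ext <;> simp
      rw [hsub, Complex.norm_def, Complex.normSq_mk,
        show (c * (t - 1) / (2 * c ^ 2 + 1 + t) - c) * (c * (t - 1) / (2 * c ^ 2 + 1 + t) - c)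
          + r * q / (2 * c ^ 2 + 1 + t) * (r * q / (2 * c ^ 2 + 1 + t)) = r ^ 2 from by
            linear_combination hmem1]
      exact Real.sqrt_sq hr0.le
    · show ‖(w₀ : ℂ) - ((t * c : ℝ) : ℂ)‖ = t * r
      have hsub : (w₀ : ℂ) - ((t * c : ℝ) : ℂ) = ⟨c * t * (1 - t) / (2 * t * c ^ 2 + 1 + t)
          - t * c, t * r * q / (2 * t * c ^ 2 + 1 + t)⟩ := by
        rw [hw₀def]
        apply Complex.ext <;> simp
      rw [hsub, Complex.norm_def, Complex.normSq_mk,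
        show (c * t * (1 - t) / (2 * t * c ^ 2 + 1 + t) - t * c)
            * (c * t * (1 - t) / (2 * t * c ^ 2 + 1 + t) - t * c)
          + t * r * q / (2 * t * c ^ 2 + 1 + t) * (t * r * q / (2 * t * c ^ 2 + 1 + t))
          = (t * r) ^ 2 from by linear_combination hmem2]
      exact Real.sqrt_sq (by positivity)
    · -- the distance between the two points
      have him : z₀.im * w₀.im = t * (c ^ 2 + 1) * ((1 + t) ^ 2 + 4 * c ^ 2 * t)
          / ((2 * c ^ 2 + 1 + t) * (2 * t * c ^ 2 + 1 + t)) := by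
        rw [show z₀.im = r * q / (2 * c ^ 2 + 1 + t) from rfl,
          show w₀.im = t * r * q / (2 * t * c ^ 2 + 1 + t) from rfl]
        exact hyY
      have hsub : (z₀ : ℂ) - (w₀ : ℂ)
          = ⟨c * (t - 1) / (2 * c ^ 2 + 1 + t) - c * t * (1 - t) / (2 * t * c ^ 2 + 1 + t),
            r * q / (2 * c ^ 2 + 1 + t) - t * r * q / (2 * t * c ^ 2 + 1 + t)⟩ := by
        rw [hz₀def, hw₀def]
        apply Complex.ext <;> simp
      have hD2 : dist (z₀ : ℂ) (w₀ : ℂ) ^ 2 = (t - 1) ^ 2 * ((1 + t) ^ 2 + 4 * c ^ 2 * t)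
          / ((2 * c ^ 2 + 1 + t) * (2 * t * c ^ 2 + 1 + t)) := by
        rw [Complex.dist_eq, Complex.sq_norm, hsub, Complex.normSq_mk]
        linear_combination hnum
      have hA2 : (dist (z₀ : ℂ) (w₀ : ℂ) / (2 * Real.sqrt (z₀.im * w₀.im))) ^ 2
          = (s / r) ^ 2 := by
        rw [div_pow, mul_pow, Real.sq_sqrt (by positivity : (0:ℝ) ≤ z₀.im * w₀.im), hD2, him,
          div_pow]
        rw [show (2:ℝ) ^ 2 * (t * (c ^ 2 + 1) * ((1 + t) ^ 2 + 4 * c ^ 2 * t)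
            / ((2 * c ^ 2 + 1 + t) * (2 * t * c ^ 2 + 1 + t)))
          = 4 * t * (c ^ 2 + 1) * ((1 + t) ^ 2 + 4 * c ^ 2 * t)
            / ((2 * c ^ 2 + 1 + t) * (2 * t * c ^ 2 + 1 + t)) from by ring]
        rw [div_div_div_eq]
        rw [div_eq_div_iff (by positivity) (by positivity)]
        linear_combination ((t - 1) ^ 2 * ((1 + t) ^ 2 + 4 * c ^ 2 * t)
            * ((2 * c ^ 2 + 1 + t) * (2 * t * c ^ 2 + 1 + t))) * hr2
          - ((c ^ 2 + 1) * ((1 + t) ^ 2 + 4 * c ^ 2 * t)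
            * ((2 * c ^ 2 + 1 + t) * (2 * t * c ^ 2 + 1 + t))) * hs2
      have hA : dist (z₀ : ℂ) (w₀ : ℂ) / (2 * Real.sqrt (z₀.im * w₀.im)) = s / r := by
        have hge : 0 ≤ dist (z₀ : ℂ) (w₀ : ℂ) / (2 * Real.sqrt (z₀.im * w₀.im)) :=
          div_nonneg dist_nonneg (by positivity)
        calc dist (z₀ : ℂ) (w₀ : ℂ) / (2 * Real.sqrt (z₀.im * w₀.im))
            = Real.sqrt ((dist (z₀ : ℂ) (w₀ : ℂ) / (2 * Real.sqrt (z₀.im * w₀.im))) ^ 2) :=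
              (Real.sqrt_sq hge).symm
          _ = Real.sqrt ((s / r) ^ 2) := by rw [hA2]
          _ = s / r := Real.sqrt_sq (by positivity)
      rw [UpperHalfPlane.dist_eq, hA]
  · -- lower bound
    rintro d ⟨z, hz, w, hw, rfl⟩
    have h1 : (z.re - c) ^ 2 + z.im ^ 2 = c ^ 2 + 1 := by
      have h := congrArg (· ^ 2) hz
      simp only [Complex.sq_norm, Complex.normSq_apply, Complex.sub_re, Complex.sub_im,
        Complex.ofReal_re, Complex.ofReal_im, UpperHalfPlane.coe_re, UpperHalfPlane.coe_im] at h
      linear_combination h + hr2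
    have h2 : (w.re - t * c) ^ 2 + w.im ^ 2 = t ^ 2 * (c ^ 2 + 1) := by
      have h := congrArg (· ^ 2) hw
      simp only [Complex.sq_norm, Complex.normSq_apply, Complex.sub_re, Complex.sub_im,
        Complex.ofReal_re, Complex.ofReal_im, UpperHalfPlane.coe_re, UpperHalfPlane.coe_im] at h
      linear_combination h + t ^ 2 * hr2
    have h3 := key_ineq c t z.re z.im w.re w.im ht0 h1 h2
    rw [UpperHalfPlane.dist_eq]
    have harg : s / r ≤ dist (z : ℂ) (w : ℂ) / (2 * Real.sqrt (z.im * w.im)) := by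
      rw [div_le_div_iff₀ hr0 (by positivity)]
      have hD2 : dist (z : ℂ) (w : ℂ) ^ 2 = (z.re - w.re) ^ 2 + (z.im - w.im) ^ 2 := by
        rw [Complex.dist_eq, Complex.sq_norm, Complex.normSq_apply]
        simp only [Complex.sub_re, Complex.sub_im, UpperHalfPlane.coe_re,
          UpperHalfPlane.coe_im]
        ring
      have hsq : (s * (2 * Real.sqrt (z.im * w.im))) ^ 2 ≤ (dist (z : ℂ) (w : ℂ) * r) ^ 2 := by
        rw [mul_pow, mul_pow, Real.sq_sqrt (by positivity : (0:ℝ) ≤ z.im * w.im),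
          mul_pow, hD2, hr2]
        have h5 : 4 * t * s ^ 2 * (z.im * w.im) = (t - 1) ^ 2 * (z.im * w.im) := by
          linear_combination (z.im * w.im) * hs2
        have h6 : t * (4 * s ^ 2 * (z.im * w.im))
            ≤ t * ((c ^ 2 + 1) * ((z.re - w.re) ^ 2 + (z.im - w.im) ^ 2)) := by
          linarith [h3, h5]
        have h7 := le_of_mul_le_mul_left h6 ht0
        linarith [h7]
      calc s * (2 * Real.sqrt (z.im * w.im))
          = Real.sqrt ((s * (2 * Real.sqrt (z.im * w.im))) ^ 2) :=
            (Real.sqrt_sq (by positivity)).symm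
        _ ≤ Real.sqrt ((dist (z : ℂ) (w : ℂ) * r) ^ 2) := Real.sqrt_le_sqrt hsq
        _ = dist (z : ℂ) (w : ℂ) * r := Real.sqrt_sq (mul_nonneg dist_nonneg hr0.le)
    have h4 := Real.arsinh_le_arsinh.mpr harg
    linarith
end

section
/- Let ℓ > 0 and τ ∈ ℝ, and write coth(x) = cosh(x)/sinh(x). Define f, g : ℝ → ℝ by f(t) = e^t·τ + 2·e^t·log(coth(ℓ/2)) − 2·log(coth(e^t·ℓ/2)) and g(t) = e^t·τ − 2·e^t·log(coth(ℓ/2)) + 2·log(coth(e^t·ℓ/2)). Then f − g is differentiable at t = 0 with derivative (f − g)'(0) = 4·log(coth(ℓ/2)) + 2·ℓ·tanh(ℓ/2)·(1/sinh(ℓ/2))², and this derivative is strictly positive. (These are the Fenchel–Nielsen twist coordinates (Eq. 4.2) and (Eq. 4.3) along the two stretch paths through a point with ℓ_α = ℓ, τ_α = τ; the positivity is the transversality assertion of Theorem 4.1.) -/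
/-- The hyperbolic cotangent, `coth x = cosh x / sinh x`. -/
noncomputable def coth (x : ℝ) : ℝ := Real.cosh x / Real.sinh x

/-- The transversality assertion of Theorem 4.1 of Dumas–Lenzhen–Rafi–Tao: with
`f(t) = e^t·τ + 2·e^t·log(coth(ℓ/2)) − 2·log(coth(e^t·ℓ/2))` and
`g(t) = e^t·τ − 2·e^t·log(coth(ℓ/2)) + 2·log(coth(e^t·ℓ/2))` the Fenchel–Nielsen twist
coordinates (Eq. 4.2), (Eq. 4.3) along the two stretch paths through a point with
`ℓ_α = ℓ`, `τ_α = τ`, the difference `f − g` is differentiable at `t = 0` with derivative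
`4·log(coth(ℓ/2)) + 2·ℓ·tanh(ℓ/2)·csch²(ℓ/2)`, and this derivative is strictly positive. -/
theorem twist_difference_derivative_pos (ℓ τ : ℝ) (hℓ : 0 < ℓ) :
    HasDerivAt
      (fun t : ℝ =>
        (Real.exp t * τ + 2 * Real.exp t * Real.log (coth (ℓ / 2)) -
            2 * Real.log (coth (Real.exp t * ℓ / 2))) -
          (Real.exp t * τ - 2 * Real.exp t * Real.log (coth (ℓ / 2)) +
            2 * Real.log (coth (Real.exp t * ℓ / 2))))
      (4 * Real.log (coth (ℓ / 2)) +
        2 * ℓ * Real.tanh (ℓ / 2) * (1 / Real.sinh (ℓ / 2)) ^ 2) 0 ∧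
    0 < 4 * Real.log (coth (ℓ / 2)) +
        2 * ℓ * Real.tanh (ℓ / 2) * (1 / Real.sinh (ℓ / 2)) ^ 2 := by
  have hs : 0 < ℓ / 2 := by linarith
  have hsinh : 0 < Real.sinh (ℓ / 2) := Real.sinh_pos_iff.2 hs
  have hcosh : 0 < Real.cosh (ℓ / 2) := Real.cosh_pos _
  have hcoth1 : 1 < coth (ℓ / 2) := by
    rw [coth, lt_div_iff₀ hsinh, one_mul]
    exact Real.sinh_lt_cosh _
  have hlogpos : 0 < Real.log (coth (ℓ / 2)) := Real.log_pos hcoth1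
  have htanh : 0 < Real.tanh (ℓ / 2) := by
    rw [Real.tanh_eq_sinh_div_cosh]; positivity
  have hpos : 0 < 4 * Real.log (coth (ℓ / 2)) +
      2 * ℓ * Real.tanh (ℓ / 2) * (1 / Real.sinh (ℓ / 2)) ^ 2 := by positivity
  refine ⟨?_, hpos⟩
  have hsne : Real.sinh (ℓ / 2) ≠ 0 := ne_of_gt hsinh
  have hcothne : coth (ℓ / 2) ≠ 0 := by
    rw [coth]; positivity
  -- inner function
  have hu : HasDerivAt (fun t : ℝ => Real.exp t * ℓ / 2) (ℓ / 2) 0 := by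
    simpa using ((Real.hasDerivAt_exp 0).mul_const ℓ).div_const 2
  have hcothderiv : HasDerivAt coth
      ((Real.sinh (ℓ / 2) * Real.sinh (ℓ / 2) - Real.cosh (ℓ / 2) * Real.cosh (ℓ / 2)) /
        Real.sinh (ℓ / 2) ^ 2) (ℓ / 2) :=
    (Real.hasDerivAt_cosh _).div (Real.hasDerivAt_sinh _) hsne
  have hlog : HasDerivAt (fun t : ℝ => Real.log (coth (Real.exp t * ℓ / 2)))
      ((Real.sinh (ℓ / 2) * Real.sinh (ℓ / 2) - Real.cosh (ℓ / 2) * Real.cosh (ℓ / 2)) /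
        Real.sinh (ℓ / 2) ^ 2 / coth (ℓ / 2) * (ℓ / 2)) 0 := by
    have e : Real.exp 0 * ℓ / 2 = ℓ / 2 := by simp
    have hc : HasDerivAt (fun y => Real.log (coth y))
        ((Real.sinh (ℓ / 2) * Real.sinh (ℓ / 2) - Real.cosh (ℓ / 2) * Real.cosh (ℓ / 2)) /
          Real.sinh (ℓ / 2) ^ 2 / coth (ℓ / 2)) (Real.exp 0 * ℓ / 2) := by
      rw [e]; exact hcothderiv.log hcothne
    exact hc.comp 0 hu
  have h1 : HasDerivAt (fun t : ℝ => Real.exp t * τ) (τ) 0 := by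
    simpa using (Real.hasDerivAt_exp 0).mul_const τ
  have h2 : HasDerivAt (fun t : ℝ => 2 * Real.exp t * Real.log (coth (ℓ / 2)))
      (2 * Real.log (coth (ℓ / 2))) 0 := by
    simpa using ((Real.hasDerivAt_exp 0).const_mul 2).mul_const (Real.log (coth (ℓ / 2)))
  have h3 := hlog.const_mul 2
  have hmain := ((h1.add h2).sub h3).sub ((h1.sub h2).add h3)
  refine hmain.congr_deriv (Eq.symm ?_)
  have hid : Real.cosh (ℓ / 2) ^ 2 - Real.sinh (ℓ / 2) ^ 2 = 1 := Real.cosh_sq_sub_sinh_sq _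
  rw [coth, Real.tanh_eq_sinh_div_cosh]
  have hcne : Real.cosh (ℓ / 2) ≠ 0 := ne_of_gt hcosh
  field_simp
  linear_combination (-2 * ℓ) * hid
end

section
/- Let E be a real normed vector space, U ⊆ E an open set, and 𝓔 a nonempty collection of maps e : U → (E →L[ℝ] ℝ) (families of continuous linear functionals, i.e. 1-forms on U). Assume 𝓔 is locally uniformly bounded and locally uniformly Lipschitz: for every x ∈ U there exist δ > 0 with ball(x, δ) ⊆ U and constants C, K ≥ 0 such that for all e ∈ 𝓔 and all y, y' ∈ ball(x, δ) one has ‖e(y)‖ ≤ C and ‖e(y) − e(y')‖ ≤ K·‖y − y'‖ (operator norms). Then the function F : U × E → ℝ defined by F(x, v) = ⨆_{e ∈ 𝓔} e(x)(v) is locally Lipschitz on U × E: every point of U × E has a neighborhood on which F is Lipschitz (with respect to the product metric). (This is Lemma 6.2 of the paper, expressed in a chart: a supremum of a locally uniformly bounded, locally uniformly Lipschitz family of 1-forms is a locally Lipschitz function on the tangent bundle.) -/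
/-- **Lemma 6.2 of Dumas–Lenzhen–Rafi–Tao**, expressed in a chart: let `U` be an open set in
a real normed vector space `E` and let `𝓔` be a nonempty collection of `1`-forms on `U`
(families of continuous linear functionals `e : U → (E →L[ℝ] ℝ)`, here defined on all of `E`
with all hypotheses imposed only on `U`).  If `𝓔` is locally uniformly bounded and locally
uniformly Lipschitz — for every `x ∈ U` there are `δ > 0` with `ball x δ ⊆ U` and constants
`C, K ≥ 0` such that `‖e y‖ ≤ C` and `‖e y − e y'‖ ≤ K·‖y − y'‖` for all `e ∈ 𝓔` and
`y, y' ∈ ball x δ` — then the function `F(x, v) = ⨆ e ∈ 𝓔, e x v` is locally Lipschitz on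
`U × E` (with the product metric): a supremum of a locally uniformly bounded, locally
uniformly Lipschitz family of `1`-forms is a locally Lipschitz function on the tangent
bundle. -/
theorem sup_of_one_forms_locallyLipschitz {E : Type*} [NormedAddCommGroup E]
    [NormedSpace ℝ E] (U : Set E) (hU : IsOpen U)
    (𝓔 : Set (E → (E →L[ℝ] ℝ))) (h𝓔 : 𝓔.Nonempty)
    (hloc : ∀ x ∈ U, ∃ δ > 0, Metric.ball x δ ⊆ U ∧ ∃ C K : ℝ, 0 ≤ C ∧ 0 ≤ K ∧
      ∀ e ∈ 𝓔, ∀ y ∈ Metric.ball x δ, ∀ y' ∈ Metric.ball x δ,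
        ‖e y‖ ≤ C ∧ ‖e y - e y'‖ ≤ K * ‖y - y'‖) :
    LocallyLipschitz (fun p : U × E => ⨆ e : 𝓔, (e : E → (E →L[ℝ] ℝ)) p.1 p.2) := by
  haveI : Nonempty 𝓔 := h𝓔.to_subtype
  rintro ⟨⟨x₀, hx₀⟩, v₀⟩
  obtain ⟨δ, hδ, hball, C, K, hC, hK, hCK⟩ := hloc x₀ hx₀
  set M : ℝ := ‖v₀‖ + 1 with hMdef
  have hM0 : 0 < M := by positivity
  have hL0 : 0 ≤ C + K * M := by positivity
  refine ⟨(C + K * M).toNNReal,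
    (Subtype.val ⁻¹' Metric.ball x₀ δ) ×ˢ Metric.ball v₀ 1, ?_, ?_⟩
  · have h1 : (Subtype.val ⁻¹' Metric.ball x₀ δ) ∈ nhds (⟨x₀, hx₀⟩ : ↥U) :=
      (Metric.isOpen_ball.preimage
        (continuous_subtype_val : Continuous ((↑) : U → E))).mem_nhds
        (show ((⟨x₀, hx₀⟩ : ↥U) : E) ∈ Metric.ball x₀ δ from Metric.mem_ball_self hδ)
    exact prod_mem_nhds h1 (Metric.ball_mem_nhds _ one_pos)
  · rw [lipschitzOnWith_iff_dist_le_mul]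
    -- boundedness of the family of values
    have bdd : ∀ x ∈ Metric.ball x₀ δ, ∀ v : E,
        BddAbove (Set.range fun e : 𝓔 => (e : E → (E →L[ℝ] ℝ)) x v) := by
      intro x hx v
      refine ⟨C * ‖v‖, ?_⟩
      rintro _ ⟨e, rfl⟩
      calc (e : E → (E →L[ℝ] ℝ)) x v ≤ ‖(e : E → (E →L[ℝ] ℝ)) x v‖ := le_abs_self _
        _ ≤ ‖(e : E → (E →L[ℝ] ℝ)) x‖ * ‖v‖ := ContinuousLinearMap.le_opNorm _ v
        _ ≤ C * ‖v‖ :=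
          mul_le_mul_of_nonneg_right ((hCK e e.2 x hx x hx).1) (norm_nonneg v)
    -- key pointwise estimate
    have key : ∀ e : 𝓔, ∀ p q : ↥U × E, (p.1 : E) ∈ Metric.ball x₀ δ →
        (q.1 : E) ∈ Metric.ball x₀ δ → q.2 ∈ Metric.ball v₀ 1 →
        (e : E → (E →L[ℝ] ℝ)) p.1 p.2 ≤
          (e : E → (E →L[ℝ] ℝ)) q.1 q.2 + (C + K * M) * dist p q := by
      intro e p q hp1 hq1 hq2
      have hqM : ‖q.2‖ ≤ M := by
        have : ‖q.2 - v₀‖ < 1 := by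
          rw [← dist_eq_norm]; exact hq2
        calc ‖q.2‖ = ‖q.2 - v₀ + v₀‖ := by rw [sub_add_cancel]
          _ ≤ ‖q.2 - v₀‖ + ‖v₀‖ := norm_add_le _ _
          _ ≤ 1 + ‖v₀‖ := by linarith
          _ = M := by rw [hMdef]; ring
      have hCbd := (hCK e e.2 p.1 hp1 p.1 hp1).1
      have hKbd := (hCK e e.2 p.1 hp1 q.1 hq1).2
      have hdv : ‖p.2 - q.2‖ ≤ dist p q := by
        rw [← dist_eq_norm]
        exact le_trans (le_max_right _ _) (le_of_eq (Prod.dist_eq).symm)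
      have hdx : ‖(p.1 : E) - (q.1 : E)‖ ≤ dist p q := by
        rw [← dist_eq_norm, ← Subtype.dist_eq]
        exact le_trans (le_max_left _ _) (le_of_eq (Prod.dist_eq).symm)
      have hd0 : (0:ℝ) ≤ dist p q := dist_nonneg
      have step1 : (e : E → (E →L[ℝ] ℝ)) p.1 p.2 - (e : E → (E →L[ℝ] ℝ)) q.1 q.2 =
          (e : E → (E →L[ℝ] ℝ)) p.1 (p.2 - q.2) +
            ((e : E → (E →L[ℝ] ℝ)) p.1 - (e : E → (E →L[ℝ] ℝ)) q.1) q.2 := by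
        simp only [ContinuousLinearMap.sub_apply, map_sub]
        ring
      have b1 : (e : E → (E →L[ℝ] ℝ)) p.1 (p.2 - q.2) ≤ C * dist p q := by
        calc (e : E → (E →L[ℝ] ℝ)) p.1 (p.2 - q.2)
            ≤ ‖(e : E → (E →L[ℝ] ℝ)) p.1 (p.2 - q.2)‖ := le_abs_self _
          _ ≤ ‖(e : E → (E →L[ℝ] ℝ)) p.1‖ * ‖p.2 - q.2‖ := ContinuousLinearMap.le_opNorm _ _
          _ ≤ C * dist p q := mul_le_mul hCbd hdv (norm_nonneg _) hC
      have b2 : ((e : E → (E →L[ℝ] ℝ)) p.1 - (e : E → (E →L[ℝ] ℝ)) q.1) q.2 ≤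
          K * M * dist p q := by
        calc ((e : E → (E →L[ℝ] ℝ)) p.1 - (e : E → (E →L[ℝ] ℝ)) q.1) q.2
            ≤ ‖((e : E → (E →L[ℝ] ℝ)) p.1 - (e : E → (E →L[ℝ] ℝ)) q.1) q.2‖ :=
              le_abs_self _
          _ ≤ ‖(e : E → (E →L[ℝ] ℝ)) p.1 - (e : E → (E →L[ℝ] ℝ)) q.1‖ * ‖q.2‖ :=
              ContinuousLinearMap.le_opNorm _ _
          _ ≤ (K * ‖(p.1 : E) - (q.1 : E)‖) * M :=
              mul_le_mul hKbd hqM (norm_nonneg _) (by positivity)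
          _ ≤ (K * dist p q) * M := by
              have : K * ‖(p.1 : E) - (q.1 : E)‖ ≤ K * dist p q :=
                mul_le_mul_of_nonneg_left hdx hK
              exact mul_le_mul_of_nonneg_right this (le_of_lt hM0)
          _ = K * M * dist p q := by ring
      nlinarith [step1, b1, b2]
    intro p hp q hq
    obtain ⟨hp1, hp2⟩ := hp
    obtain ⟨hq1, hq2⟩ := hq
    have hp1' : (p.1 : E) ∈ Metric.ball x₀ δ := hp1
    have hq1' : (q.1 : E) ∈ Metric.ball x₀ δ := hq1
    rw [Real.coe_toNNReal _ hL0, Real.dist_eq, abs_sub_le_iff]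
    constructor
    · rw [sub_le_iff_le_add, add_comm]
      refine ciSup_le fun e => ?_
      calc (e : E → (E →L[ℝ] ℝ)) p.1 p.2
          ≤ (e : E → (E →L[ℝ] ℝ)) q.1 q.2 + (C + K * M) * dist p q :=
            key e p q hp1' hq1' hq2
        _ ≤ (⨆ e' : 𝓔, (e' : E → (E →L[ℝ] ℝ)) q.1 q.2) + (C + K * M) * dist p q := by
            gcongr
            exact le_ciSup (bdd _ hq1' q.2) e
    · rw [sub_le_iff_le_add, add_comm]
      refine ciSup_le fun e => ?_
      have := key e q p hq1' hp1' hp2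
      rw [dist_comm q p] at this
      calc (e : E → (E →L[ℝ] ℝ)) q.1 q.2
          ≤ (e : E → (E →L[ℝ] ℝ)) p.1 p.2 + (C + K * M) * dist p q := this
        _ ≤ (⨆ e' : 𝓔, (e' : E → (E →L[ℝ] ℝ)) p.1 p.2) + (C + K * M) * dist p q := by
            gcongr
            exact le_ciSup (bdd _ hp1' p.2) e
end
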